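/- If A is both Γ-projective via θ to A′ ∈ Γ and Γ-projective via τ to A″ ∈ Γ, where Γ consists of formulas in parameters only, then IPC ⊢ A′ ↔ A″. (Uniqueness of Γ-projections.) -/
import Mathlib


inductive Fm : Type
  | bot : Fm
  | atom : ℕ → Fm
  | and : Fm → Fm → Fm
  | or : Fm → Fm → Fm
  | imp : Fm → Fm → Fm
deriving DecidableEq

namespace Fm

def neg (A : Fm) : Fm := A.imp .bot
def top : Fm := Fm.bot.imp .bot
def iff (A B : Fm) : Fm := (A.imp B).and (B.imp A)

def subst (θ : ℕ → Fm) : Fm → Fm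
  | bot => bot
  | atom n => θ n
  | and A B => (A.subst θ).and (B.subst θ)
  | or A B => (A.subst θ).or (B.subst θ)
  | imp A B => (A.subst θ).imp (B.subst θ)

def atoms : Fm → Finset ℕ
  | bot => ∅
  | atom n => {n}
  | and A B => A.atoms ∪ B.atoms
  | or A B => A.atoms ∪ B.atoms
  | imp A B => A.atoms ∪ B.atoms

/-- maximal nesting of implications in the left/overall: `c→`. -/
def cimp : Fm → ℕ
  | bot => 0
  | atom _ => 0
  | and A B => max A.cimp B.cimp
  | or A B => max A.cimp B.cimp
  | imp A B => 1 + max A.cimp B.cimp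

end Fm

def bigAndL (l : List Fm) : Fm := l.foldr Fm.and Fm.top
def bigOrL (l : List Fm) : Fm := l.foldr Fm.or Fm.bot

/-- nonempty disjunction -/
def bigOrNE : Fm → List Fm → Fm
  | A, [] => A
  | A, B :: l => A.or (bigOrNE B l)

/-- Hilbert-style intuitionistic propositional calculus. -/
inductive IPC : Fm → Prop
  | imp_k (A B : Fm) : IPC (A.imp (B.imp A))
  | imp_s (A B C : Fm) : IPC ((A.imp (B.imp C)).imp ((A.imp B).imp (A.imp C)))
  | and_intro (A B : Fm) : IPC (A.imp (B.imp (A.and B)))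
  | and_left (A B : Fm) : IPC ((A.and B).imp A)
  | and_right (A B : Fm) : IPC ((A.and B).imp B)
  | or_inl (A B : Fm) : IPC (A.imp (A.or B))
  | or_inr (A B : Fm) : IPC (B.imp (A.or B))
  | or_elim (A B C : Fm) : IPC ((A.imp C).imp ((B.imp C).imp ((A.or B).imp C)))
  | exfalso (A : Fm) : IPC (Fm.bot.imp A)
  | mp {A B : Fm} : IPC (A.imp B) → IPC A → IPC B

/-- Γ-preservativity in the logic T : `A ⊳_{T,Γ} B`. -/
def Pres (T : Fm → Prop) (Γ : Set Fm) (A B : Fm) : Prop :=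
  ∀ E ∈ Γ, T (E.imp A) → T (E.imp B)

/-- substitutions are identity on the parameters. -/
def IdOnPar (par : Finset ℕ) (θ : ℕ → Fm) : Prop :=
  ∀ p ∈ par, θ p = Fm.atom p

/-- implication-free formulas. -/
inductive NI : Fm → Prop
  | bot : NI .bot
  | atom (n : ℕ) : NI (.atom n)
  | and {A B : Fm} : NI A → NI B → NI (A.and B)
  | or {A B : Fm} : NI A → NI B → NI (A.or B)

/-- No Nested Implications in the Left. -/
inductive NNIL : Fm → Prop
  | bot : NNIL .bot
  | atom (n : ℕ) : NNIL (.atom n)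
  | and {A B : Fm} : NNIL A → NNIL B → NNIL (A.and B)
  | or {A B : Fm} : NNIL A → NNIL B → NNIL (A.or B)
  | imp {A B : Fm} : NI A → NNIL B → NNIL (A.imp B)

def IPCPrime (A : Fm) : Prop :=
  ∀ B C, IPC (A.imp (B.or C)) → IPC (A.imp B) ∨ IPC (A.imp C)

/-- T-components: `⋀Γ ∧ ⋀Δ`, Γ atoms, Δ implications with atomic
antecedents not T-provable from Γ. -/
def IsComponentOver (T : Fm → Prop) (B : Fm) : Prop :=
  ∃ (as : List ℕ) (imps : List (ℕ × Fm)),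
    B = (bigAndL (as.map Fm.atom)).and
          (bigAndL (imps.map fun p => (Fm.atom p.1).imp p.2)) ∧
    ∀ p ∈ imps, ¬ T ((bigAndL (as.map Fm.atom)).imp (Fm.atom p.1))

/-! Auxiliary development -/

/-- IPC with a context of hypotheses. -/
inductive Der : List Fm → Fm → Prop
  | hyp {G : List Fm} {A : Fm} : A ∈ G → Der G A
  | imp_k (G) (A B : Fm) : Der G (A.imp (B.imp A))
  | imp_s (G) (A B C : Fm) : Der G ((A.imp (B.imp C)).imp ((A.imp B).imp (A.imp C)))
  | and_intro (G) (A B : Fm) : Der G (A.imp (B.imp (A.and B)))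
  | and_left (G) (A B : Fm) : Der G ((A.and B).imp A)
  | and_right (G) (A B : Fm) : Der G ((A.and B).imp B)
  | or_inl (G) (A B : Fm) : Der G (A.imp (A.or B))
  | or_inr (G) (A B : Fm) : Der G (B.imp (A.or B))
  | or_elim (G) (A B C : Fm) : Der G ((A.imp C).imp ((B.imp C).imp ((A.or B).imp C)))
  | exfalso (G) (A : Fm) : Der G (Fm.bot.imp A)
  | mp {G : List Fm} {A B : Fm} : Der G (A.imp B) → Der G A → Der G B

theorem Der.of_IPC {G : List Fm} {A : Fm} (h : IPC A) : Der G A := by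
  induction h with
  | imp_k A B => exact Der.imp_k G A B
  | imp_s A B C => exact Der.imp_s G A B C
  | and_intro A B => exact Der.and_intro G A B
  | and_left A B => exact Der.and_left G A B
  | and_right A B => exact Der.and_right G A B
  | or_inl A B => exact Der.or_inl G A B
  | or_inr A B => exact Der.or_inr G A B
  | or_elim A B C => exact Der.or_elim G A B C
  | exfalso A => exact Der.exfalso G A
  | mp h1 h2 ih1 ih2 => exact Der.mp ih1 ih2

theorem IPC.of_Der' {G : List Fm} {A : Fm} (h : Der G A) : (∀ B ∈ G, IPC B) → IPC A := by
  induction h with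
  | hyp hm => exact fun hG => hG _ hm
  | imp_k A B => exact fun _ => IPC.imp_k A B
  | imp_s A B C => exact fun _ => IPC.imp_s A B C
  | and_intro A B => exact fun _ => IPC.and_intro A B
  | and_left A B => exact fun _ => IPC.and_left A B
  | and_right A B => exact fun _ => IPC.and_right A B
  | or_inl A B => exact fun _ => IPC.or_inl A B
  | or_inr A B => exact fun _ => IPC.or_inr A B
  | or_elim A B C => exact fun _ => IPC.or_elim A B C
  | exfalso A => exact fun _ => IPC.exfalso A
  | mp h1 h2 ih1 ih2 => exact fun hG => IPC.mp (ih1 hG) (ih2 hG)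

theorem IPC.of_Der {A : Fm} (h : Der [] A) : IPC A :=
  IPC.of_Der' h (by simp)

theorem Der.weaken {G : List Fm} {A : Fm} (h : Der G A) :
    ∀ {G' : List Fm}, (∀ B ∈ G, B ∈ G') → Der G' A := by
  induction h with
  | hyp hm => exact fun hs => Der.hyp (hs _ hm)
  | imp_k A B => exact fun {G'} _ => Der.imp_k G' A B
  | imp_s A B C => exact fun {G'} _ => Der.imp_s G' A B C
  | and_intro A B => exact fun {G'} _ => Der.and_intro G' A B
  | and_left A B => exact fun {G'} _ => Der.and_left G' A B
  | and_right A B => exact fun {G'} _ => Der.and_right G' A B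
  | or_inl A B => exact fun {G'} _ => Der.or_inl G' A B
  | or_inr A B => exact fun {G'} _ => Der.or_inr G' A B
  | or_elim A B C => exact fun {G'} _ => Der.or_elim G' A B C
  | exfalso A => exact fun {G'} _ => Der.exfalso G' A
  | mp h1 h2 ih1 ih2 => exact fun hs => Der.mp (ih1 hs) (ih2 hs)

theorem Der.id (G) (A : Fm) : Der G (A.imp A) :=
  Der.mp (Der.mp (Der.imp_s G A (A.imp A) A) (Der.imp_k G A (A.imp A)))
    (Der.imp_k G A A)

theorem Der.wk1 {G : List Fm} {A B : Fm} (h : Der G A) : Der (B :: G) A :=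
  h.weaken (fun _ hm => List.mem_cons_of_mem _ hm)

theorem Der.deduction' {G0 : List Fm} {B : Fm} (h : Der G0 B) :
    ∀ {G : List Fm} {A : Fm}, G0 = A :: G → Der G (A.imp B) := by
  induction h with
  | hyp hm =>
    rintro G A rfl
    rcases List.mem_cons.mp hm with h | h
    · subst h; exact Der.id _ _
    · exact Der.mp (Der.imp_k G _ A) (Der.hyp h)
  | imp_k X Y => rintro G A rfl; exact Der.mp (Der.imp_k G _ A) (Der.imp_k G X Y)
  | imp_s X Y Z => rintro G A rfl; exact Der.mp (Der.imp_k G _ A) (Der.imp_s G X Y Z)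
  | and_intro X Y => rintro G A rfl; exact Der.mp (Der.imp_k G _ A) (Der.and_intro G X Y)
  | and_left X Y => rintro G A rfl; exact Der.mp (Der.imp_k G _ A) (Der.and_left G X Y)
  | and_right X Y => rintro G A rfl; exact Der.mp (Der.imp_k G _ A) (Der.and_right G X Y)
  | or_inl X Y => rintro G A rfl; exact Der.mp (Der.imp_k G _ A) (Der.or_inl G X Y)
  | or_inr X Y => rintro G A rfl; exact Der.mp (Der.imp_k G _ A) (Der.or_inr G X Y)
  | or_elim X Y Z => rintro G A rfl; exact Der.mp (Der.imp_k G _ A) (Der.or_elim G X Y Z)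
  | exfalso X => rintro G A rfl; exact Der.mp (Der.imp_k G _ A) (Der.exfalso G X)
  | mp h1 h2 ih1 ih2 =>
    rintro G A rfl
    exact Der.mp (Der.mp (Der.imp_s G A _ _) (ih1 rfl)) (ih2 rfl)

theorem Der.deduction {G : List Fm} {A B : Fm} (h : Der (A :: G) B) : Der G (A.imp B) :=
  Der.deduction' h rfl

theorem Der.andI {G : List Fm} {A B : Fm} (h1 : Der G A) (h2 : Der G B) : Der G (A.and B) :=
  Der.mp (Der.mp (Der.and_intro G A B) h1) h2

theorem Der.andL {G : List Fm} {A B : Fm} (h : Der G (A.and B)) : Der G A :=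
  Der.mp (Der.and_left G A B) h

theorem Der.andR {G : List Fm} {A B : Fm} (h : Der G (A.and B)) : Der G B :=
  Der.mp (Der.and_right G A B) h

theorem Der.orE {G : List Fm} {A B C : Fm} (h : Der G (A.or B)) (h1 : Der G (A.imp C))
    (h2 : Der G (B.imp C)) : Der G C :=
  Der.mp (Der.mp (Der.mp (Der.or_elim G A B C) h1) h2) h

theorem Der.iffI {G : List Fm} {A B : Fm} (h1 : Der G (A.imp B)) (h2 : Der G (B.imp A)) :
    Der G (A.iff B) := h1.andI h2

theorem Der.iff_mp {G : List Fm} {A B : Fm} (h : Der G (A.iff B)) (hA : Der G A) : Der G B :=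
  Der.mp h.andL hA

theorem Der.iff_mpr {G : List Fm} {A B : Fm} (h : Der G (A.iff B)) (hB : Der G B) : Der G A :=
  Der.mp h.andR hB

theorem Der.iff_refl (G) (A : Fm) : Der G (A.iff A) :=
  Der.iffI (Der.id G A) (Der.id G A)

theorem Der.and_congr {G : List Fm} {X X' Y Y' : Fm} (h1 : Der G (X.iff X'))
    (h2 : Der G (Y.iff Y')) : Der G ((X.and Y).iff (X'.and Y')) := by
  refine Der.iffI (Der.deduction ?_) (Der.deduction ?_)
  · have hh : Der (X.and Y :: G) (X.and Y) := Der.hyp (by simp)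
    exact Der.andI (h1.wk1.iff_mp hh.andL) (h2.wk1.iff_mp hh.andR)
  · have hh : Der (X'.and Y' :: G) (X'.and Y') := Der.hyp (by simp)
    exact Der.andI (h1.wk1.iff_mpr hh.andL) (h2.wk1.iff_mpr hh.andR)

theorem Der.or_congr {G : List Fm} {X X' Y Y' : Fm} (h1 : Der G (X.iff X'))
    (h2 : Der G (Y.iff Y')) : Der G ((X.or Y).iff (X'.or Y')) := by
  refine Der.iffI (Der.deduction ?_) (Der.deduction ?_)
  · have hh : Der (X.or Y :: G) (X.or Y) := Der.hyp (by simp)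
    refine Der.orE hh (Der.deduction ?_) (Der.deduction ?_)
    · have hx : Der (X :: X.or Y :: G) X := Der.hyp (by simp)
      exact Der.mp (Der.or_inl _ X' Y') (h1.wk1.wk1.iff_mp hx)
    · have hy : Der (Y :: X.or Y :: G) Y := Der.hyp (by simp)
      exact Der.mp (Der.or_inr _ X' Y') (h2.wk1.wk1.iff_mp hy)
  · have hh : Der (X'.or Y' :: G) (X'.or Y') := Der.hyp (by simp)
    refine Der.orE hh (Der.deduction ?_) (Der.deduction ?_)
    · have hx : Der (X' :: X'.or Y' :: G) X' := Der.hyp (by simp)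
      exact Der.mp (Der.or_inl _ X Y) (h1.wk1.wk1.iff_mpr hx)
    · have hy : Der (Y' :: X'.or Y' :: G) Y' := Der.hyp (by simp)
      exact Der.mp (Der.or_inr _ X Y) (h2.wk1.wk1.iff_mpr hy)

theorem Der.imp_congr {G : List Fm} {X X' Y Y' : Fm} (h1 : Der G (X.iff X'))
    (h2 : Der G (Y.iff Y')) : Der G ((X.imp Y).iff (X'.imp Y')) := by
  refine Der.iffI (Der.deduction (Der.deduction ?_)) (Der.deduction (Der.deduction ?_))
  · have hi : Der (X' :: X.imp Y :: G) (X.imp Y) := Der.hyp (by simp)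
    have hx : Der (X' :: X.imp Y :: G) X' := Der.hyp (by simp)
    exact h2.wk1.wk1.iff_mp (Der.mp hi (h1.wk1.wk1.iff_mpr hx))
  · have hi : Der (X :: X'.imp Y' :: G) (X'.imp Y') := Der.hyp (by simp)
    have hx : Der (X :: X'.imp Y' :: G) X := Der.hyp (by simp)
    exact h2.wk1.wk1.iff_mpr (Der.mp hi (h1.wk1.wk1.iff_mp hx))

/-- congruence of substitutions under a hypothesis context. -/
theorem Der.subst_congr {G : List Fm} (s1 s2 : ℕ → Fm)
    (h : ∀ a, Der G ((s1 a).iff (s2 a))) (B : Fm) :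
    Der G ((B.subst s1).iff (B.subst s2)) := by
  induction B with
  | bot => exact Der.iff_refl _ _
  | atom a => exact h a
  | and X Y ihX ihY => exact ihX.and_congr ihY
  | or X Y ihX ihY => exact ihX.or_congr ihY
  | imp X Y ihX ihY => exact ihX.imp_congr ihY

/-- IPC is closed under substitution. -/
theorem IPC.subst (s : ℕ → Fm) {A : Fm} (h : IPC A) : IPC (A.subst s) := by
  induction h with
  | imp_k A B => exact IPC.imp_k _ _
  | imp_s A B C => exact IPC.imp_s _ _ _
  | and_intro A B => exact IPC.and_intro _ _
  | and_left A B => exact IPC.and_left _ _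
  | and_right A B => exact IPC.and_right _ _
  | or_inl A B => exact IPC.or_inl _ _
  | or_inr A B => exact IPC.or_inr _ _
  | or_elim A B C => exact IPC.or_elim _ _ _
  | exfalso A => exact IPC.exfalso _
  | mp h1 h2 ih1 ih2 => exact IPC.mp ih1 ih2

theorem Fm.subst_id_of_atoms {par : Finset ℕ} {s : ℕ → Fm} (hs : IdOnPar par s)
    {B : Fm} (hB : B.atoms ⊆ par) : B.subst s = B := by
  induction B with
  | bot => rfl
  | atom a => exact hs a (by simpa [Fm.atoms] using hB)
  | and X Y ihX ihY =>
    simp only [Fm.atoms, Finset.union_subset_iff] at hB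
    simp [Fm.subst, ihX hB.1, ihY hB.2]
  | or X Y ihX ihY =>
    simp only [Fm.atoms, Finset.union_subset_iff] at hB
    simp [Fm.subst, ihX hB.1, ihY hB.2]
  | imp X Y ihX ihY =>
    simp only [Fm.atoms, Finset.union_subset_iff] at hB
    simp [Fm.subst, ihX hB.1, ihY hB.2]

theorem Fm.subst_subst (s1 s2 : ℕ → Fm) (B : Fm) :
    (B.subst s1).subst s2 = B.subst (fun n => (s1 n).subst s2) := by
  induction B with
  | bot => rfl
  | atom a => rfl
  | and X Y ihX ihY => simp [Fm.subst, ihX, ihY]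
  | or X Y ihX ihY => simp [Fm.subst, ihX, ihY]
  | imp X Y ihX ihY => simp [Fm.subst, ihX, ihY]

/-- key direction lemma -/
theorem proj_dir (par : Finset ℕ) (Γ : Set Fm)
    (hΓ : ∀ B ∈ Γ, B.atoms ⊆ par) (A A' A'' : Fm) (θ τ : ℕ → Fm)
    (hθ : IdOnPar par θ)
    (hprojτ : ∀ a : ℕ, IPC (A.imp ((Fm.atom a).iff (τ a))))
    (hA'' : A'' ∈ Γ)
    (h1 : IPC ((A.subst θ).iff A')) (h2 : IPC ((A.subst τ).iff A'')) :
    IPC (A'.imp A'') := by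
  apply IPC.of_Der
  apply Der.deduction
  set G : List Fm := [A'] with hG
  -- From A' get θ(A)
  have hθA : Der G (A.subst θ) :=
    (Der.of_IPC h1).iff_mpr (Der.hyp (by simp [hG]))
  -- substituted projectivity: θ(A) → (θ a ↔ θ(τ a))
  have hsub : ∀ a, Der G ((θ a).iff ((τ a).subst θ)) := by
    intro a
    have h := IPC.subst θ (hprojτ a)
    simp only [Fm.subst, Fm.iff] at h ⊢
    exact Der.mp (Der.of_IPC h) hθA
  -- hence θ(A) ↔ θ(τ(A))
  have hc : Der G ((A.subst θ).iff (A.subst (fun n => (τ n).subst θ))) :=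
    Der.subst_congr _ _ hsub A
  have hθτA : Der G ((A.subst τ).subst θ) := by
    rw [Fm.subst_subst]
    exact hc.iff_mp hθA
  -- θ(τ(A)) ↔ θ(A'') = A''
  have h2' : IPC (((A.subst τ).subst θ).iff A'') := by
    have h := IPC.subst θ h2
    simpa only [Fm.subst, Fm.iff,
      Fm.subst_id_of_atoms hθ (hΓ A'' hA'')] using h
  exact (Der.of_IPC h2').iff_mp hθτA

theorem stmt_7 (par : Finset ℕ) (Γ : Set Fm)
    (hΓ : ∀ B ∈ Γ, B.atoms ⊆ par) (A A' A'' : Fm) (θ τ : ℕ → Fm)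
    (hθ : IdOnPar par θ) (hτ : IdOnPar par τ)
    (hprojθ : ∀ a : ℕ, IPC (A.imp ((Fm.atom a).iff (θ a))))
    (hprojτ : ∀ a : ℕ, IPC (A.imp ((Fm.atom a).iff (τ a))))
    (hA' : A' ∈ Γ) (hA'' : A'' ∈ Γ)
    (h1 : IPC ((A.subst θ).iff A')) (h2 : IPC ((A.subst τ).iff A'')) :
    IPC (A'.iff A'') := by
  have d1 := proj_dir par Γ hΓ A A' A'' θ τ hθ hprojτ hA'' h1 h2
  have d2 := proj_dir par Γ hΓ A A'' A' τ θ hτ hprojθ hA' h2 h1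
  exact IPC.mp (IPC.mp (IPC.and_intro _ _) d1) d2
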